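/- arXiv:1511.05046 — 3 statements merged into one kernel-verified Lean document; each statement's English description precedes it below -/
import Mathlib

section
/- The operator Φ defined by (Φu)(l) = 2 ∫₀^{l_m} r(l,ĺ) ∫₀^{a_m} β(a,ĺ) u(a,ĺ) da dĺ, mapping L^1((0,a_m)×(0,l_m)) to L^1(0,l_m), is a compact operator, provided r satisfies the uniform equicontinuity condition sup_{l,ĺ} |r(l+t,ĺ) − r(l,ĺ)| ≤ k·δ(t) with δ(t) → 0 as t → 0. -/
/-!
Write `g(ĺ) = ∫ β(a,ĺ) u(a,ĺ) da`, so that `Φu(l) = 2 ∫ r(l,ĺ) g(ĺ) dĺ` and, by Fubini,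
`‖g‖₁ ≤ Cβ ‖u‖₁`. Hence `|Φu(l)| ≤ 2 Cr Cβ ‖u‖₁` and `|Φu(l+t) - Φu(l)| ≤ 2 k δ(t) Cβ ‖u‖₁`:
the unit ball is mapped to a uniformly bounded, equicontinuous family of continuous functions
on `[0, l_m]`. By Arzelà–Ascoli this family is relatively compact in `C([0, l_m])`, and
`C([0, l_m]) → L¹(0, l_m)` is continuous, so the image of the unit ball is relatively compact.
-/

open MeasureTheory Set Filter Topology BoundedContinuousFunction Metric
open scoped ENNReal

section KernelBounds

variable {Y : Type*} [MeasurableSpace Y] {ν : Measure Y} {K K' g : Y → ℝ} {c : ℝ}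

theorem norm_integral_mul_le_of_abs_le (hg : Integrable g ν) (hK : ∀ y, |K y| ≤ c) :
    ‖∫ y, K y * g y ∂ν‖ ≤ c * ∫ y, ‖g y‖ ∂ν := by
  rw [← integral_const_mul]
  refine norm_integral_le_of_norm_le (hg.norm.const_mul c) (ae_of_all _ fun y => ?_)
  rw [norm_mul, Real.norm_eq_abs]
  exact mul_le_mul_of_nonneg_right (hK y) (norm_nonneg _)

theorem dist_integral_mul_le_of_abs_sub_le (hg : Integrable g ν)
    (hKg : Integrable (fun y => K y * g y) ν) (hK'g : Integrable (fun y => K' y * g y) ν)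
    (hK : ∀ y, |K y - K' y| ≤ c) :
    dist (∫ y, K y * g y ∂ν) (∫ y, K' y * g y ∂ν) ≤ c * ∫ y, ‖g y‖ ∂ν := by
  rw [dist_eq_norm, ← integral_sub hKg hK'g]
  simp_rw [← sub_mul]
  exact norm_integral_mul_le_of_abs_le hg hK

end KernelBounds

theorem integral_norm_integral_le_integral_norm_prod {X Y E : Type*} [MeasurableSpace X]
    [MeasurableSpace Y] [NormedAddCommGroup E] [NormedSpace ℝ E] {μ : Measure X}
    {ν : Measure Y} [SFinite μ] [SFinite ν] {f : X × Y → E} (hf : Integrable f (μ.prod ν)) :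
    ∫ y, ‖∫ x, f (x, y) ∂μ‖ ∂ν ≤ ∫ z, ‖f z‖ ∂μ.prod ν := by
  rw [integral_prod_symm _ hf.norm]
  exact integral_mono hf.integral_prod_right.norm hf.norm.integral_prod_right
    fun y => norm_integral_le_integral_norm _

theorem Equicontinuous.comp_continuous {ι X Y α : Type*} [TopologicalSpace X]
    [TopologicalSpace Y] [UniformSpace α] {F : ι → X → α} (hF : Equicontinuous F) {g : Y → X}
    (hg : Continuous g) : Equicontinuous fun i => F i ∘ g :=
  fun y U hU => (hg.tendsto y).eventually (hF (g y) U hU)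

theorem equicontinuous_of_eventually_dist_add_le {ι G α : Type*} [SeminormedAddCommGroup G]
    [PseudoMetricSpace α] {f : ι → G → α} {ω : G → ℝ} (hω : Tendsto ω (𝓝 0) (𝓝 0))
    (hf : ∀ᶠ t in 𝓝 0, ∀ i x, dist (f i (x + t)) (f i x) ≤ ω t) : Equicontinuous f := by
  intro x₀
  rw [Metric.equicontinuousAt_iff_right]
  intro η hη
  have hsmall : ∀ᶠ t in 𝓝 (0 : G), ∀ i x, dist (f i (x + t)) (f i x) < η := by
    filter_upwards [hf, hω (Iio_mem_nhds hη)] with t ht htη i x using (ht i x).trans_lt htη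
  have hshift : Tendsto (fun x => x - x₀) (𝓝 x₀) (𝓝 0) := by
    simpa using (continuous_sub_right x₀).tendsto x₀
  filter_upwards [hshift hsmall] with x hx i
  simpa only [add_sub_cancel, dist_comm] using hx i x₀

theorem isCompactOperator_of_equicontinuous {E X Z : Type*} [SeminormedAddCommGroup E]
    [TopologicalSpace X] [CompactSpace X] [MeasurableSpace Z] [TopologicalSpace Z]
    [BorelSpace Z] [SecondCountableTopologyEither Z ℝ] {μ : Measure Z} [IsFiniteMeasure μ]
    {p : ℝ≥0∞} [Fact (1 ≤ p)] (π : C(Z, X)) (T : E → Lp ℝ p μ) (f : E → X → ℝ) {C : ℝ}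
    (hbdd : ∀ u ∈ closedBall (0 : E) 1, ∀ x, ‖f u x‖ ≤ C)
    (heq : Equicontinuous fun u : closedBall (0 : E) 1 => f u)
    (hT : ∀ u ∈ closedBall (0 : E) 1, T u =ᵐ[μ] fun z => f u (π z)) :
    IsCompactOperator T := by
  let F : closedBall (0 : E) 1 → X →ᵇ ℝ := fun u =>
    ofNormedAddCommGroup (f u) (heq.continuous u) C (hbdd u u.2)
  have hcompact : IsCompact (closure (range F)) :=
    arzela_ascoli (Icc (-C) C) isCompact_Icc _
      (by rintro - x ⟨u, rfl⟩; exact abs_le.mp (hbdd u u.2 x))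
      (by
        have hF : Equicontinuous fun u => ⇑(F u) := heq
        simpa only [Function.comp_def, apply_rangeSplitting] using hF.comp (rangeSplitting F))
  let Ψ : (X →ᵇ ℝ) → Lp ℝ p μ := fun h => toLp p μ ℝ (h.compContinuous π)
  rw [isCompactOperator_iff_exists_mem_nhds_image_subset_compact]
  refine ⟨closedBall 0 1, closedBall_mem_nhds 0 one_pos, Ψ '' closure (range F),
    hcompact.image ((toLp p μ ℝ).continuous.comp (continuous_compContinuous π)), ?_⟩
  rintro - ⟨u, hu, rfl⟩
  refine ⟨F ⟨u, hu⟩, subset_closure (mem_range_self _), Lp.ext ?_⟩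
  filter_upwards [coeFn_toLp p μ ℝ ((F ⟨u, hu⟩).compContinuous π), hT u hu] with z h₁ h₂
  rw [h₁, h₂]
  rfl

section BoundaryOperator

variable {μ ν : Measure ℝ} {β r : ℝ → ℝ → ℝ} {u : ℝ × ℝ → ℝ} {Cβ Cr : ℝ}

noncomputable def ageIntegral (μ : Measure ℝ) (β : ℝ → ℝ → ℝ) (u : ℝ × ℝ → ℝ) (l' : ℝ) : ℝ :=
  ∫ a, β a l' * u (a, l') ∂μ

/-- The operator `Φ`, for `μ`, `ν` Lebesgue measure on `(0, a_m)`, `(0, l_m)`. -/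
noncomputable def boundaryOperator (μ ν : Measure ℝ) (β r : ℝ → ℝ → ℝ) (u : ℝ × ℝ → ℝ)
    (l : ℝ) : ℝ :=
  2 * ∫ l', r l l' * ageIntegral μ β u l' ∂ν

theorem integrable_weight_mul (hβmeas : Measurable fun q : ℝ × ℝ => β q.1 q.2)
    (hβ : ∀ a l, |β a l| ≤ Cβ) (hu : Integrable u (μ.prod ν)) :
    Integrable (fun q : ℝ × ℝ => β q.1 q.2 * u q) (μ.prod ν) :=
  hu.bdd_mul hβmeas.aestronglyMeasurable (ae_of_all _ fun q => hβ q.1 q.2)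

variable [SFinite μ] [SFinite ν]

theorem integrable_ageIntegral (hβmeas : Measurable fun q : ℝ × ℝ => β q.1 q.2)
    (hβ : ∀ a l, |β a l| ≤ Cβ) (hu : Integrable u (μ.prod ν)) :
    Integrable (ageIntegral μ β u) ν :=
  (integrable_weight_mul hβmeas hβ hu).integral_prod_right

theorem integral_norm_ageIntegral_le (hβmeas : Measurable fun q : ℝ × ℝ => β q.1 q.2)
    (hβ : ∀ a l, |β a l| ≤ Cβ) (hu : Integrable u (μ.prod ν)) :
    ∫ l', ‖ageIntegral μ β u l'‖ ∂ν ≤ Cβ * ∫ q, ‖u q‖ ∂(μ.prod ν) := by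
  have hβu := integrable_weight_mul hβmeas hβ hu
  refine (integral_norm_integral_le_integral_norm_prod hβu).trans ?_
  rw [← integral_const_mul]
  refine integral_mono hβu.norm (hu.norm.const_mul Cβ) fun q => ?_
  rw [norm_mul, Real.norm_eq_abs]
  exact mul_le_mul_of_nonneg_right (hβ _ _) (norm_nonneg _)

theorem abs_boundaryOperator_le (hr : ∀ l l', |r l l'| ≤ Cr)
    (hβmeas : Measurable fun q : ℝ × ℝ => β q.1 q.2) (hβ : ∀ a l, |β a l| ≤ Cβ)
    (hu : Integrable u (μ.prod ν)) (l : ℝ) :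
    |boundaryOperator μ ν β r u l| ≤ 2 * (Cr * (Cβ * ∫ q, ‖u q‖ ∂(μ.prod ν))) := by
  rw [boundaryOperator, abs_mul, abs_two, ← Real.norm_eq_abs]
  gcongr
  calc ‖∫ l', r l l' * ageIntegral μ β u l' ∂ν‖
      ≤ Cr * ∫ l', ‖ageIntegral μ β u l'‖ ∂ν :=
        norm_integral_mul_le_of_abs_le (integrable_ageIntegral hβmeas hβ hu) (hr l)
    _ ≤ Cr * (Cβ * ∫ q, ‖u q‖ ∂(μ.prod ν)) :=
        mul_le_mul_of_nonneg_left (integral_norm_ageIntegral_le hβmeas hβ hu)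
          ((abs_nonneg _).trans (hr 0 0))

theorem dist_boundaryOperator_le (hrmeas : Measurable fun q : ℝ × ℝ => r q.1 q.2)
    (hr : ∀ l l', |r l l'| ≤ Cr) (hβmeas : Measurable fun q : ℝ × ℝ => β q.1 q.2)
    (hβ : ∀ a l, |β a l| ≤ Cβ) (hu : Integrable u (μ.prod ν)) {l₁ l₂ c : ℝ}
    (hc : ∀ l', |r l₁ l' - r l₂ l'| ≤ c) :
    dist (boundaryOperator μ ν β r u l₁) (boundaryOperator μ ν β r u l₂)
      ≤ 2 * (c * (Cβ * ∫ q, ‖u q‖ ∂(μ.prod ν))) := by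
  have hg := integrable_ageIntegral hβmeas hβ hu
  have hrg : ∀ l, Integrable (fun l' => r l l' * ageIntegral μ β u l') ν := fun l =>
    hg.bdd_mul (hrmeas.comp measurable_prodMk_left).aestronglyMeasurable
      (ae_of_all _ fun l' => hr l l')
  rw [boundaryOperator, boundaryOperator, Real.dist_eq, ← mul_sub, abs_mul, abs_two,
    ← Real.dist_eq]
  gcongr
  calc dist (∫ l', r l₁ l' * ageIntegral μ β u l' ∂ν) (∫ l', r l₂ l' * ageIntegral μ β u l' ∂ν)
      ≤ c * ∫ l', ‖ageIntegral μ β u l'‖ ∂ν :=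
        dist_integral_mul_le_of_abs_sub_le hg (hrg l₁) (hrg l₂) hc
    _ ≤ c * (Cβ * ∫ q, ‖u q‖ ∂(μ.prod ν)) :=
        mul_le_mul_of_nonneg_left (integral_norm_ageIntegral_le hβmeas hβ hu)
          ((abs_nonneg _).trans (hc 0))

theorem equicontinuous_boundaryOperator (hrmeas : Measurable fun q : ℝ × ℝ => r q.1 q.2)
    (hr : ∀ l l', |r l l'| ≤ Cr) (hβmeas : Measurable fun q : ℝ × ℝ => β q.1 q.2)
    (hβ : ∀ a l, |β a l| ≤ Cβ) {k : ℝ} {δ : ℝ → ℝ} (hδ : Tendsto δ (𝓝 0) (𝓝 0))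
    (hreg : ∃ ε > (0:ℝ), ∀ t : ℝ, |t| < ε → ∀ l l' : ℝ, |r (l + t) l' - r l l'| ≤ k * δ t)
    {ι : Type*} {u : ι → ℝ × ℝ → ℝ} (hu : ∀ i, Integrable (u i) (μ.prod ν))
    (hu₁ : ∀ i, ∫ q, ‖u i q‖ ∂(μ.prod ν) ≤ 1) :
    Equicontinuous fun i => boundaryOperator μ ν β r (u i) := by
  obtain ⟨ε, hε, hreg⟩ := hreg
  have hCβ : 0 ≤ Cβ := (abs_nonneg _).trans (hβ 0 0)
  refine equicontinuous_of_eventually_dist_add_le (ω := fun t => 2 * (k * δ t * Cβ))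
    (by simpa using ((hδ.const_mul k).mul_const Cβ).const_mul 2) ?_
  filter_upwards [ball_mem_nhds (0:ℝ) hε] with t ht i l
  rw [mem_ball, Real.dist_eq, sub_zero] at ht
  refine (dist_boundaryOperator_le hrmeas hr hβmeas hβ (hu i) (hreg t ht l)).trans ?_
  gcongr 2 * (_ * ?_)
  · exact (abs_nonneg _).trans (hreg t ht 0 0)
  · exact mul_le_of_le_one_right hCβ (hu₁ i)

end BoundaryOperator

theorem intervalIntegral_eq_boundaryOperator {a_m l_m : ℝ} (ham : 0 ≤ a_m) (hlm : 0 ≤ l_m)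
    (β r : ℝ → ℝ → ℝ) (u : ℝ × ℝ → ℝ) (l : ℝ) :
    2 * ∫ l' in (0:ℝ)..l_m, r l l' * ∫ a in (0:ℝ)..a_m, β a l' * u (a, l')
      = boundaryOperator (volume.restrict (Ioo 0 a_m)) (volume.restrict (Ioo 0 l_m)) β r u l := by
  simp only [intervalIntegral.integral_of_le ham, intervalIntegral.integral_of_le hlm,
    integral_Ioc_eq_integral_Ioo]
  rfl

/-- The boundary operator Φ : L¹((0,a_m)×(0,l_m)) → L¹(0,l_m) is compact,
provided r satisfies the uniform equicontinuity condition. -/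
theorem stmt_2 (a_m l_m Cβ Cr k : ℝ) (ham : 0 < a_m) (hlm : 0 < l_m)
    (β r : ℝ → ℝ → ℝ) (δ : ℝ → ℝ)
    (hβ0 : ∀ a l, 0 ≤ β a l) (hβb : ∀ a l, β a l ≤ Cβ)
    (hr0 : ∀ l l', 0 ≤ r l l') (hrb : ∀ l l', r l l' ≤ Cr)
    (hrmeas : Measurable fun q : ℝ × ℝ => r q.1 q.2)
    (hβmeas : Measurable fun q : ℝ × ℝ => β q.1 q.2)
    (hδ : Tendsto δ (nhds 0) (nhds 0))
    (hreg : ∃ ε > (0:ℝ), ∀ t : ℝ, |t| < ε → ∀ l l' : ℝ,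
      |r (l + t) l' - r l l'| ≤ k * δ t)
    (T : Lp ℝ 1 (volume.restrict (Ioo (0:ℝ) a_m ×ˢ Ioo (0:ℝ) l_m)) →L[ℝ]
         Lp ℝ 1 (volume.restrict (Ioo (0:ℝ) l_m)))
    (hT : ∀ u, (T u : ℝ → ℝ) =ᵐ[volume.restrict (Ioo (0:ℝ) l_m)]
      fun l => 2 * ∫ l' in (0:ℝ)..l_m, r l l' *
        ∫ a in (0:ℝ)..a_m, β a l' * (u : ℝ × ℝ → ℝ) (a, l')) :
    IsCompactOperator T := by
  have hβ : ∀ a l, |β a l| ≤ Cβ := fun a l => (abs_of_nonneg (hβ0 a l)).trans_le (hβb a l)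
  have hr : ∀ l l', |r l l'| ≤ Cr := fun l l' => (abs_of_nonneg (hr0 l l')).trans_le (hrb l l')
  let μ := volume.restrict (Ioo (0:ℝ) a_m)
  let ν := volume.restrict (Ioo (0:ℝ) l_m)
  have hprod : volume.restrict (Ioo (0:ℝ) a_m ×ˢ Ioo (0:ℝ) l_m) = μ.prod ν := by
    rw [Measure.prod_restrict, ← Measure.volume_eq_prod]
  have hint : ∀ u : Lp ℝ 1 (volume.restrict (Ioo (0:ℝ) a_m ×ˢ Ioo (0:ℝ) l_m)),
      Integrable u (μ.prod ν) := fun u => hprod ▸ L1.integrable_coeFn u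
  have hnorm : ∀ u ∈ closedBall
      (0 : Lp ℝ 1 (volume.restrict (Ioo (0:ℝ) a_m ×ˢ Ioo (0:ℝ) l_m))) 1,
      ∫ q, ‖u q‖ ∂(μ.prod ν) ≤ 1 := fun u hu => by
    rw [← hprod, ← L1.norm_eq_integral_norm]
    exact mem_closedBall_zero_iff.mp hu
  have hequi : Equicontinuous fun u : closedBall
      (0 : Lp ℝ 1 (volume.restrict (Ioo (0:ℝ) a_m ×ˢ Ioo (0:ℝ) l_m))) 1 =>
      boundaryOperator μ ν β r u.1 :=
    equicontinuous_boundaryOperator hrmeas hr hβmeas hβ hδ hreg (fun u => hint u.1)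
      fun u => hnorm u.1 u.2
  -- functions on `[0, l_m]` are read in `L¹(0, l_m)` through the projection `ℝ → [0, l_m]`
  refine isCompactOperator_of_equicontinuous ⟨projIcc 0 l_m hlm.le, continuous_projIcc⟩ T
    (fun u x => boundaryOperator μ ν β r u (x : ℝ)) (C := 2 * (Cr * Cβ)) (fun u hu x => ?_)
    (hequi.comp_continuous continuous_subtype_val) (fun u _ => ?_)
  · refine (abs_boundaryOperator_le hr hβmeas hβ (hint u) x).trans ?_
    gcongr 2 * (Cr * ?_)
    · exact (abs_nonneg _).trans (hr 0 0)
    · exact mul_le_of_le_one_right ((abs_nonneg _).trans (hβ 0 0)) (hnorm u hu)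
  · filter_upwards [hT u, ae_restrict_mem measurableSet_Ioo] with l hl hmem
    rw [hl, ContinuousMap.coe_mk, projIcc_of_mem hlm.le (Ioo_subset_Icc_self hmem)]
    exact intervalIntegral_eq_boundaryOperator ham.le hlm.le β r u l
end

section
/- If nonnegative differentiable functions P₀, P₁, P₂ satisfy P₀' ≤ −σP₀, P₁' ≤ ωP₀ − σP₁, P₂' ≤ ω(P₀+P₁) − σP₂ with σ, ω > 0, then P₂(t) ≤ e^{−σt}( P₂(0) + ω t (P₀(0)+P₁(0)) + (ω² t²/2) P₀(0) ) for all t ≥ 0. -/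
open Set

/-! Multiplying by `exp (σ t)` turns each inequality `Pᵢ' ≤ (source) - σ Pᵢ` into a bound on the
derivative of `exp (σ t) Pᵢ t` by the weighted source term.  Feeding in the bounds already obtained
for the lower indices, the sources are dominated by `0`, `ω P₀(0)` and
`ω (P₀(0) + P₁(0)) + ω² t P₀(0)` in turn, and integrating these polynomial bounds gives
`exp (σ t) P₂ t ≤ P₂(0) + ω t (P₀(0) + P₁(0)) + ω² t² / 2 · P₀(0)`. -/

lemma le_apply_zero_of_hasDerivAt_nonpos {f f' : ℝ → ℝ}
    (hf : ∀ t, 0 ≤ t → HasDerivAt f (f' t) t) (hf' : ∀ t, 0 ≤ t → f' t ≤ 0) :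
    ∀ t, 0 ≤ t → f t ≤ f 0 := by
  have hanti : AntitoneOn f (Ici 0) := by
    refine antitoneOn_of_hasDerivWithinAt_nonpos (f' := f') (convex_Ici 0)
      (fun t ht => (hf t ht).continuousAt.continuousWithinAt) (fun t ht => ?_) (fun t ht => ?_)
    all_goals rw [interior_Ici] at ht
    · exact (hf t (le_of_lt ht)).hasDerivWithinAt
    · exact hf' t (le_of_lt ht)
  exact fun t ht => hanti self_mem_Ici ht ht

lemma exp_mul_sub_le_of_hasDerivAt {σ : ℝ} {f f' g g' : ℝ → ℝ}
    (hf : ∀ t, 0 ≤ t → HasDerivAt f (f' t) t) (hg : ∀ t, 0 ≤ t → HasDerivAt g (g' t) t)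
    (hle : ∀ t, 0 ≤ t → Real.exp (σ * t) * (f' t + σ * f t) ≤ g' t) :
    ∀ t, 0 ≤ t → Real.exp (σ * t) * f t - g t ≤ f 0 - g 0 := by
  have hexp (t : ℝ) : HasDerivAt (fun s => Real.exp (σ * s)) (Real.exp (σ * t) * σ) t := by
    simpa using ((hasDerivAt_id t).const_mul σ).exp
  have key := le_apply_zero_of_hasDerivAt_nonpos
    (fun t ht => ((hexp t).mul (hf t ht)).sub (hg t ht)) (fun t ht => by linarith [hle t ht])
  simpa using key

theorem stmt_11_general (σ ω : ℝ) (hω : 0 < ω)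
    (P₀ P₁ P₂ d₀ d₁ d₂ : ℝ → ℝ)
    (hd₀ : ∀ t, 0 ≤ t → HasDerivAt P₀ (d₀ t) t)
    (hd₁ : ∀ t, 0 ≤ t → HasDerivAt P₁ (d₁ t) t)
    (hd₂ : ∀ t, 0 ≤ t → HasDerivAt P₂ (d₂ t) t)
    (h₀ : ∀ t, 0 ≤ t → d₀ t ≤ -σ * P₀ t)
    (h₁ : ∀ t, 0 ≤ t → d₁ t ≤ ω * P₀ t - σ * P₁ t)
    (h₂ : ∀ t, 0 ≤ t → d₂ t ≤ ω * (P₀ t + P₁ t) - σ * P₂ t) :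
    ∀ t, 0 ≤ t →
      P₂ t ≤ Real.exp (-σ * t) *
        (P₂ 0 + ω * t * (P₀ 0 + P₁ 0) + ω ^ 2 * t ^ 2 / 2 * P₀ 0) := by
  have hlin (c t : ℝ) : HasDerivAt (fun s => c * s) c t := by
    simpa using (hasDerivAt_id t).const_mul c
  have hquad (c t : ℝ) : HasDerivAt (fun s => c * s ^ 2 / 2) (c * t) t := by
    refine (((hasDerivAt_pow 2 t).const_mul c).div_const 2).congr_deriv ?_
    norm_num
    ring
  have hQ₀ : ∀ t, 0 ≤ t → Real.exp (σ * t) * P₀ t ≤ P₀ 0 := by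
    simpa using exp_mul_sub_le_of_hasDerivAt hd₀ (fun t _ => hasDerivAt_const t 0) fun t ht => by
      nlinarith [Real.exp_pos (σ * t), h₀ t ht]
  have hQ₁ : ∀ t, 0 ≤ t → Real.exp (σ * t) * P₁ t - ω * P₀ 0 * t ≤ P₁ 0 := by
    simpa using exp_mul_sub_le_of_hasDerivAt hd₁ (fun t _ => hlin (ω * P₀ 0) t) fun t ht => by
      nlinarith [Real.exp_pos (σ * t), h₁ t ht, hQ₀ t ht]
  have hQ₂ : ∀ t, 0 ≤ t → Real.exp (σ * t) * P₂ t
      - (ω * (P₀ 0 + P₁ 0) * t + ω ^ 2 * P₀ 0 * t ^ 2 / 2) ≤ P₂ 0 := by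
    simpa using exp_mul_sub_le_of_hasDerivAt hd₂
      (fun t _ => (hlin (ω * (P₀ 0 + P₁ 0)) t).add (hquad (ω ^ 2 * P₀ 0) t)) fun t ht => by
      nlinarith [Real.exp_pos (σ * t), h₂ t ht, hQ₀ t ht, hQ₁ t ht]
  intro t ht
  rw [neg_mul, Real.exp_neg, ← div_eq_inv_mul, le_div_iff₀' (Real.exp_pos _)]
  linarith [hQ₂ t ht]

/-- If P₀' ≤ −σP₀, P₁' ≤ ωP₀ − σP₁, P₂' ≤ ω(P₀+P₁) − σP₂, then
P₂(t) ≤ e^{−σt}(P₂(0) + ωt(P₀(0)+P₁(0)) + ω²t²/2 · P₀(0)). -/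
theorem stmt_11 (σ ω : ℝ) (hσ : 0 < σ) (hω : 0 < ω)
    (P₀ P₁ P₂ d₀ d₁ d₂ : ℝ → ℝ)
    (hP₀nn : ∀ t, 0 ≤ t → 0 ≤ P₀ t)
    (hP₁nn : ∀ t, 0 ≤ t → 0 ≤ P₁ t)
    (hP₂nn : ∀ t, 0 ≤ t → 0 ≤ P₂ t)
    (hd₀ : ∀ t, 0 ≤ t → HasDerivAt P₀ (d₀ t) t)
    (hd₁ : ∀ t, 0 ≤ t → HasDerivAt P₁ (d₁ t) t)
    (hd₂ : ∀ t, 0 ≤ t → HasDerivAt P₂ (d₂ t) t)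
    (h₀ : ∀ t, 0 ≤ t → d₀ t ≤ -σ * P₀ t)
    (h₁ : ∀ t, 0 ≤ t → d₁ t ≤ ω * P₀ t - σ * P₁ t)
    (h₂ : ∀ t, 0 ≤ t → d₂ t ≤ ω * (P₀ t + P₁ t) - σ * P₂ t) :
    ∀ t, 0 ≤ t →
      P₂ t ≤ Real.exp (-σ * t) *
        (P₂ 0 + ω * t * (P₀ 0 + P₁ 0) + ω ^ 2 * t ^ 2 / 2 * P₀ 0) :=
  stmt_11_general σ ω hω P₀ P₁ P₂ d₀ d₁ d₂ hd₀ hd₁ hd₂ h₀ h₁ h₂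
end

section
/- The boundary output of Φ applied to any nonnegative u satisfies ∫₀^{l_m} |Φ(u)(l)| dl ≤ ∫₀^{l_m} ∫₀^{a_m} |u(a,ĺ)| · 2β(a,ĺ) · ( ∫₀^{l_m} r(l,ĺ) dl ) da dĺ; consequently, if μ(a,l) + β(a,l) + F(0) ≥ 2β(a,l) ∫₀^{l_m} r(ĺ,l) dĺ + κ for some κ > 0 and all (a,l), then for any classical solution p ≥ 0 of the linear problem p_t + p_a = −(β+μ+F(0))p with p(0,l,t) = Φ(p(·,·,t))(l) and p(a_m,·,t) ≥ 0, the total population P(t) = ∫∫ p satisfies P'(t) ≤ −κ P(t), so P(t) ≤ e^{−κt} P(0). -/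
/-!
Integrating `Φ(u)` over `l` and exchanging the order of integration moves the kernel `r` onto
the newborn's trait: `∫ Φ(u) = ∫∫ u(a,l') · 2β(a,l') ∫ r(l,l') dl`, which is the claimed bound
(with equality) for `u ≥ 0`. For a solution `p`, integrating `p_t = -p_a - (β+μ+F(0)) p` in age
turns the transport term into the boundary fluxes `p(0,l) - p(a_m,l)`. The inflow `∫ p(0,l) dl`
is `∫ Φ(p)`, which the dissipativity condition bounds by `∫∫ (μ+β+F(0)-κ) p`, and the outflow is
nonnegative; hence `P' ≤ -κP`, so `e^{κt} P(t)` is antitone.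
-/

open MeasureTheory Set Filter Topology

theorem intervalIntegral_intervalIntegral_eq_setIntegral_Ioo_prod {a₀ a₁ b₀ b₁ : ℝ}
    (ha : a₀ ≤ a₁) (hb : b₀ ≤ b₁) {f : ℝ × ℝ → ℝ}
    (hf : IntegrableOn f (Ioo a₀ a₁ ×ˢ Ioo b₀ b₁)) :
    ∫ y in b₀..b₁, ∫ x in a₀..a₁, f (x, y) = ∫ q in Ioo a₀ a₁ ×ˢ Ioo b₀ b₁, f q := by
  rw [Measure.volume_eq_prod] at hf ⊢
  rw [← setIntegral_prod_swap, setIntegral_prod (fun z => f z.swap) hf.swap,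
    intervalIntegral.integral_of_le hb, integral_Ioc_eq_integral_Ioo]
  refine setIntegral_congr_fun measurableSet_Ioo fun y _ => ?_
  rw [intervalIntegral.integral_of_le ha, integral_Ioc_eq_integral_Ioo]
  rfl

theorem integral_integral_bdd_mul_swap {X Y : Type*} [MeasurableSpace X] [MeasurableSpace Y]
    {μ : Measure X} {ν : Measure Y} [IsFiniteMeasure μ] [SFinite ν] {k : X → Y → ℝ}
    {f : Y → ℝ} {C : ℝ} (hk : AEStronglyMeasurable (Function.uncurry k) (μ.prod ν))
    (hkC : ∀ᵐ z ∂μ.prod ν, ‖Function.uncurry k z‖ ≤ C) (hf : Integrable f ν) :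
    ∫ x, ∫ y, k x y * f y ∂ν ∂μ = ∫ y, (∫ x, k x y ∂μ) * f y ∂ν := by
  have hkf : Integrable (Function.uncurry fun x y => k x y * f y) (μ.prod ν) :=
    (hf.comp_snd μ).bdd_mul hk hkC
  rw [integral_integral_swap hkf]
  simp_rw [integral_mul_const]

theorem le_exp_mul_of_hasDerivAt_le_neg_mul {P P' : ℝ → ℝ} {κ t : ℝ}
    (hP : ∀ s, HasDerivAt P (P' s) s) (hle : ∀ s, 0 ≤ s → P' s ≤ -κ * P s) (ht : 0 ≤ t) :
    P t ≤ Real.exp (-κ * t) * P 0 := by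
  have hderiv : ∀ s, HasDerivAt (fun s => Real.exp (κ * s) * P s)
      (Real.exp (κ * s) * (κ * P s + P' s)) s := fun s => by
    have hexp : HasDerivAt (fun s => Real.exp (κ * s)) (Real.exp (κ * s) * κ) s := by
      simpa using ((hasDerivAt_id s).const_mul κ).exp
    exact (hexp.mul (hP s)).congr_deriv (by ring)
  have hanti : AntitoneOn (fun s => Real.exp (κ * s) * P s) (Ici 0) := by
    refine antitoneOn_of_hasDerivWithinAt_nonpos (convex_Ici 0)
      (fun s _ => (hderiv s).continuousAt.continuousWithinAt)
      (fun s _ => (hderiv s).hasDerivWithinAt) fun s hs => ?_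
    have := hle s (interior_subset hs)
    exact mul_nonpos_of_nonneg_of_nonpos (Real.exp_pos _).le (by linarith)
  have h := hanti self_mem_Ici ht ht
  simp only [mul_zero, Real.exp_zero, one_mul] at h
  calc P t = Real.exp (-κ * t) * (Real.exp (κ * t) * P t) := by
        rw [← mul_assoc, ← Real.exp_add]; simp
    _ ≤ Real.exp (-κ * t) * P 0 := by gcongr

theorem intervalIntegral_eq_sub_sub_of_hasDerivAt {f f' g c : ℝ → ℝ} {x y : ℝ}
    (hf : ∀ a, HasDerivAt f (f' a) a) (hfg : ∀ a, g a + f' a = -c a * f a)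
    (hg : Continuous g) (hcf : Continuous fun a => c a * f a) :
    ∫ a in x..y, g a = f x - f y - ∫ a in x..y, c a * f a := by
  have hf' : f' = fun a => -g a - c a * f a := funext fun a => by linarith [hfg a]
  have hFTC := intervalIntegral.integral_eq_sub_of_hasDerivAt (a := x) (b := y) (fun a _ => hf a)
    (by rw [hf']; exact (hg.neg.sub hcf).intervalIntegrable x y)
  rw [hf'] at hFTC
  beta_reduce at hFTC
  rw [intervalIntegral.integral_sub (f := fun a => -g a) (hg.neg.intervalIntegrable x y)
    (hcf.intervalIntegrable x y), intervalIntegral.integral_neg] at hFTC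
  linarith

noncomputable def birthOperator (a_m l_m : ℝ) (β r : ℝ → ℝ → ℝ) (u : ℝ × ℝ → ℝ) (l : ℝ) : ℝ :=
  2 * ∫ l' in (0:ℝ)..l_m, r l l' * ∫ a in (0:ℝ)..a_m, β a l' * u (a, l')

section BirthOperator

variable {a_m l_m : ℝ} {β r : ℝ → ℝ → ℝ} {u : ℝ × ℝ → ℝ}

theorem birthOperator_nonneg (ham : 0 ≤ a_m) (hlm : 0 ≤ l_m) (hβ0 : ∀ a l, 0 ≤ β a l)
    (hr0 : ∀ l l', 0 ≤ r l l') (hu0 : ∀ q, 0 ≤ u q) (l : ℝ) :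
    0 ≤ birthOperator a_m l_m β r u l :=
  mul_nonneg zero_le_two <| intervalIntegral.integral_nonneg hlm fun l' _ =>
    mul_nonneg (hr0 l l') <| intervalIntegral.integral_nonneg ham fun a _ =>
      mul_nonneg (hβ0 a l') (hu0 (a, l'))

theorem integral_birthOperator (ham : 0 ≤ a_m) (hlm : 0 ≤ l_m)
    (hβ : Continuous fun q : ℝ × ℝ => β q.1 q.2) (hr : Continuous fun q : ℝ × ℝ => r q.1 q.2)
    (hu : IntegrableOn u (Ioo 0 a_m ×ˢ Ioo 0 l_m)) :
    ∫ l in (0:ℝ)..l_m, birthOperator a_m l_m β r u l =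
      ∫ q in Ioo 0 a_m ×ˢ Ioo 0 l_m, u q * (2 * β q.1 q.2 * ∫ l in (0:ℝ)..l_m, r l q.2) := by
  set K := Ioo 0 a_m ×ˢ Ioo 0 l_m
  have hK : MeasurableSet K := measurableSet_Ioo.prod measurableSet_Ioo
  have hKsub : K ⊆ Icc 0 a_m ×ˢ Icc 0 l_m := prod_mono Ioo_subset_Icc_self Ioo_subset_Icc_self
  have hkernel : Continuous fun z : ℝ × ℝ × ℝ => r z.1 z.2.2 * β z.2.1 z.2.2 := by fun_prop
  have hinner : ∀ l, ∫ l' in (0:ℝ)..l_m, r l l' * ∫ a in (0:ℝ)..a_m, β a l' * u (a, l') =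
      ∫ q in K, (r l q.2 * β q.1 q.2) * u q := fun l => by
    have hcont : Continuous fun q : ℝ × ℝ => r l q.2 * β q.1 q.2 :=
      hkernel.comp (continuous_const.prodMk continuous_id)
    rw [← intervalIntegral_intervalIntegral_eq_setIntegral_Ioo_prod ham hlm
      (hu.continuousOn_mul_of_subset hcont.continuousOn (isCompact_Icc.prod isCompact_Icc) hK
        hKsub)]
    refine intervalIntegral.integral_congr fun l' _ => ?_
    simp only [← intervalIntegral.integral_const_mul, mul_assoc]
  obtain ⟨C, hC⟩ := IsCompact.exists_bound_of_continuousOn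
    (isCompact_Icc.prod (isCompact_Icc.prod isCompact_Icc))
    (hkernel.continuousOn (s := Icc 0 l_m ×ˢ (Icc 0 a_m ×ˢ Icc 0 l_m)))
  have hbound : ∀ᵐ z ∂(volume.restrict (Ioc 0 l_m)).prod (volume.restrict K),
      ‖r z.1 z.2.2 * β z.2.1 z.2.2‖ ≤ C := by
    rw [Measure.prod_restrict]
    filter_upwards [ae_restrict_mem (measurableSet_Ioc.prod hK)] with z hz
    exact hC z ⟨Ioc_subset_Icc_self hz.1, hKsub hz.2⟩
  calc ∫ l in (0:ℝ)..l_m, birthOperator a_m l_m β r u l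
      = 2 * ∫ l in Ioc 0 l_m, ∫ q in K, (r l q.2 * β q.1 q.2) * u q := by
        simp only [birthOperator, hinner, integral_const_mul, intervalIntegral.integral_of_le hlm]
    _ = 2 * ∫ q in K, (∫ l in Ioc 0 l_m, r l q.2 * β q.1 q.2) * u q := by
        rw [integral_integral_bdd_mul_swap hkernel.aestronglyMeasurable hbound hu]
    _ = _ := by
        rw [← integral_const_mul]
        refine setIntegral_congr_fun hK fun q _ => ?_
        rw [integral_mul_const, intervalIntegral.integral_of_le hlm]
        ring

end BirthOperator

theorem integral_integral_le_neg_mul_of_dissipative {a_m l_m κ : ℝ} (ham : 0 ≤ a_m)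
    (hlm : 0 ≤ l_m) {β r : ℝ → ℝ → ℝ} (hβ : Continuous fun q : ℝ × ℝ => β q.1 q.2)
    (hr : Continuous fun q : ℝ × ℝ => r q.1 q.2) {c u v w : ℝ × ℝ → ℝ} (hc : Continuous c)
    (hu : Continuous u) (hv : Continuous v) (hu0 : ∀ q, 0 ≤ u q)
    (hw : ∀ a l, HasDerivAt (fun b => u (b, l)) (w (a, l)) a)
    (hbalance : ∀ a l, v (a, l) + w (a, l) = -c (a, l) * u (a, l))
    (hbirth : ∀ l, u (0, l) = birthOperator a_m l_m β r u l)
    (hdiss : ∀ a ∈ Icc 0 a_m, ∀ l ∈ Icc 0 l_m,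
      2 * β a l * (∫ l' in (0:ℝ)..l_m, r l' l) + κ ≤ c (a, l)) :
    ∫ l in (0:ℝ)..l_m, ∫ a in (0:ℝ)..a_m, v (a, l) ≤
      -κ * ∫ l in (0:ℝ)..l_m, ∫ a in (0:ℝ)..a_m, u (a, l) := by
  have hK : MeasurableSet (Ioo 0 a_m ×ˢ Ioo 0 l_m) := measurableSet_Ioo.prod measurableSet_Ioo
  have hint : ∀ g : ℝ × ℝ → ℝ, Continuous g → IntegrableOn g (Ioo 0 a_m ×ˢ Ioo 0 l_m) :=
    fun g hg =>
    (hg.continuousOn.integrableOn_compact (isCompact_Icc.prod isCompact_Icc)).mono_set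
      (prod_mono Ioo_subset_Icc_self Ioo_subset_Icc_self)
  have hcu : Continuous fun q => c q * u q := hc.mul hu
  have hR : Continuous fun l' => ∫ l in (0:ℝ)..l_m, r l l' :=
    intervalIntegral.continuous_parametric_intervalIntegral_of_continuous'
      (f := fun l' l => r l l') (hr.comp continuous_swap) 0 l_m
  have hage : ∀ l, ∫ a in (0:ℝ)..a_m, v (a, l) =
      u (0, l) - u (a_m, l) - ∫ a in (0:ℝ)..a_m, c (a, l) * u (a, l) := fun l =>
    intervalIntegral_eq_sub_sub_of_hasDerivAt (hw · l) (hbalance · l)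
      (hv.comp (continuous_id.prodMk continuous_const))
      (hcu.comp (continuous_id.prodMk continuous_const))
  have hinflow : ∫ l in (0:ℝ)..l_m, u (0, l) ≤ ∫ q in Ioo 0 a_m ×ˢ Ioo 0 l_m, u q * (c q - κ) := by
    rw [intervalIntegral.integral_congr fun l _ => hbirth l,
      integral_birthOperator ham hlm hβ hr (hint u hu)]
    refine setIntegral_mono_on (hint _ (by fun_prop)) (hint _ (by fun_prop)) hK fun q hq => ?_
    have := hdiss q.1 (Ioo_subset_Icc_self hq.1) q.2 (Ioo_subset_Icc_self hq.2)
    exact mul_le_mul_of_nonneg_left (by linarith) (hu0 q)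
  have houtflow : 0 ≤ ∫ l in (0:ℝ)..l_m, u (a_m, l) :=
    intervalIntegral.integral_nonneg hlm fun l _ => hu0 _
  have hslice : ∀ x, Continuous fun l => u (x, l) := fun x =>
    hu.comp (continuous_const.prodMk continuous_id)
  have hloss : Continuous fun l => ∫ a in (0:ℝ)..a_m, c (a, l) * u (a, l) :=
    intervalIntegral.continuous_parametric_intervalIntegral_of_continuous'
      (f := fun l a => c (a, l) * u (a, l)) (hcu.comp continuous_swap) 0 a_m
  calc ∫ l in (0:ℝ)..l_m, ∫ a in (0:ℝ)..a_m, v (a, l)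
      = (∫ l in (0:ℝ)..l_m, u (0, l)) - (∫ l in (0:ℝ)..l_m, u (a_m, l)) -
          ∫ l in (0:ℝ)..l_m, ∫ a in (0:ℝ)..a_m, c (a, l) * u (a, l) := by
        rw [intervalIntegral.integral_congr fun l _ => hage l,
          intervalIntegral.integral_sub
            ((by fun_prop : Continuous fun l => u (0, l) - u (a_m, l)).intervalIntegrable 0 l_m)
            (hloss.intervalIntegrable 0 l_m),
          intervalIntegral.integral_sub ((hslice 0).intervalIntegrable 0 l_m)
            ((hslice a_m).intervalIntegrable 0 l_m)]
    _ ≤ (∫ q in Ioo 0 a_m ×ˢ Ioo 0 l_m, u q * (c q - κ)) -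
          ∫ q in Ioo 0 a_m ×ˢ Ioo 0 l_m, c q * u q := by
        rw [intervalIntegral_intervalIntegral_eq_setIntegral_Ioo_prod ham hlm (hint _ hcu)]
        linarith
    _ = -κ * ∫ q in Ioo 0 a_m ×ˢ Ioo 0 l_m, u q := by
        rw [← integral_sub (hint (fun q => u q * (c q - κ)) (by fun_prop)) (hint _ hcu),
          ← integral_const_mul]
        congr 1 with q
        ring
    _ = -κ * ∫ l in (0:ℝ)..l_m, ∫ a in (0:ℝ)..a_m, u (a, l) := by
        rw [intervalIntegral_intervalIntegral_eq_setIntegral_Ioo_prod ham hlm (hint u hu)]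

theorem stmt_19_general (a_m l_m F0 κ : ℝ) (ham : 0 < a_m) (hlm : 0 < l_m)
    (β μ : ℝ → ℝ → ℝ) (r : ℝ → ℝ → ℝ)
    (hβ : Continuous fun q : ℝ × ℝ => β q.1 q.2) (hβ0 : ∀ a l, 0 ≤ β a l)
    (hμ : Continuous fun q : ℝ × ℝ => μ q.1 q.2)
    (hr : Continuous fun q : ℝ × ℝ => r q.1 q.2) (hr0 : ∀ l l', 0 ≤ r l l')
    (Φ : (ℝ × ℝ → ℝ) → ℝ → ℝ)
    (hΦ : ∀ u l, Φ u l =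
      2 * ∫ l' in (0:ℝ)..l_m, r l l' * ∫ a in (0:ℝ)..a_m, β a l' * u (a, l'))
    (hdiss : ∀ a ∈ Icc 0 a_m, ∀ l ∈ Icc 0 l_m,
      2 * β a l * (∫ l' in (0:ℝ)..l_m, r l' l) + κ ≤ μ a l + β a l + F0)
    (p pt pa : ℝ → ℝ → ℝ → ℝ)
    (hp0 : ∀ a l t, 0 ≤ p a l t)
    (hpa : ∀ a l t, HasDerivAt (fun b => p b l t) (pa a l t) a)
    (hPDE : ∀ a l t, pt a l t + pa a l t = -(β a l + μ a l + F0) * p a l t)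
    (hbc : ∀ l t, p 0 l t = Φ (fun q => p q.1 q.2 t) l)
    (hcont : ∀ t, Continuous fun q : ℝ × ℝ => p q.1 q.2 t)
    (hcont' : ∀ t, Continuous fun q : ℝ × ℝ => pt q.1 q.2 t)
    (P : ℝ → ℝ)
    (hP : ∀ t, P t = ∫ l in (0:ℝ)..l_m, ∫ a in (0:ℝ)..a_m, p a l t)
    (hP' : ∀ t, HasDerivAt P (∫ l in (0:ℝ)..l_m, ∫ a in (0:ℝ)..a_m, pt a l t) t) :
    -- L¹ bound on the boundary output of Φ
    (∀ u : ℝ × ℝ → ℝ,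
      Integrable u (volume.restrict (Ioo 0 a_m ×ˢ Ioo 0 l_m)) →
      (∀ q, 0 ≤ u q) →
      ∫ l in (0:ℝ)..l_m, |Φ u l| ≤
        ∫ q in Ioo 0 a_m ×ˢ Ioo 0 l_m,
          |u q| * (2 * β q.1 q.2 * ∫ l in (0:ℝ)..l_m, r l q.2)) ∧
    -- exponential decay of the total population
    (∀ t, 0 ≤ t →
      (∫ l in (0:ℝ)..l_m, ∫ a in (0:ℝ)..a_m, pt a l t) ≤ -κ * P t) ∧
    (∀ t, 0 ≤ t → P t ≤ Real.exp (-κ * t) * P 0) := by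
  obtain rfl : Φ = birthOperator a_m l_m β r := funext fun u => funext (hΦ u)
  have hdecay : ∀ t, (∫ l in (0:ℝ)..l_m, ∫ a in (0:ℝ)..a_m, pt a l t) ≤ -κ * P t := fun t => by
    rw [hP t]
    exact integral_integral_le_neg_mul_of_dissipative ham.le hlm.le hβ hr
      (c := fun q => β q.1 q.2 + μ q.1 q.2 + F0) (w := fun q => pa q.1 q.2 t) (by fun_prop)
      (hcont t) (hcont' t)
      (fun q => hp0 q.1 q.2 t) (hpa · · t) (hPDE · · t) (hbc · t)
      fun a ha l hl => (hdiss a ha l hl).trans_eq (by ring)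
  refine ⟨fun u hu hu0 => le_of_eq ?_, fun t _ => hdecay t,
    fun t ht => le_exp_mul_of_hasDerivAt_le_neg_mul hP' (fun s _ => hdecay s) ht⟩
  simp_rw [abs_of_nonneg (hu0 _),
    abs_of_nonneg (birthOperator_nonneg ham.le hlm.le hβ0 hr0 hu0 _)]
  exact integral_birthOperator ham.le hlm.le hβ hr hu

/-- L¹ bound for the boundary operator Φ, and exponential decay of the total
population under the dissipativity condition μ+β+F(0) ≥ 2β∫r(l',l)dl' + κ. -/
theorem stmt_19 (a_m l_m F0 κ : ℝ) (ham : 0 < a_m) (hlm : 0 < l_m)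
    (hF0 : 0 ≤ F0) (hκ : 0 < κ)
    (β μ : ℝ → ℝ → ℝ) (r : ℝ → ℝ → ℝ)
    (hβ : Continuous fun q : ℝ × ℝ => β q.1 q.2) (hβ0 : ∀ a l, 0 ≤ β a l)
    (hμ : Continuous fun q : ℝ × ℝ => μ q.1 q.2) (hμ0 : ∀ a l, 0 ≤ μ a l)
    (hr : Continuous fun q : ℝ × ℝ => r q.1 q.2) (hr0 : ∀ l l', 0 ≤ r l l')
    (Φ : (ℝ × ℝ → ℝ) → ℝ → ℝ)
    (hΦ : ∀ u l, Φ u l =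
      2 * ∫ l' in (0:ℝ)..l_m, r l l' * ∫ a in (0:ℝ)..a_m, β a l' * u (a, l'))
    (hdiss : ∀ a ∈ Icc 0 a_m, ∀ l ∈ Icc 0 l_m,
      2 * β a l * (∫ l' in (0:ℝ)..l_m, r l' l) + κ ≤ μ a l + β a l + F0)
    (p pt pa : ℝ → ℝ → ℝ → ℝ)
    (hp0 : ∀ a l t, 0 ≤ p a l t)
    (hpt : ∀ a l t, HasDerivAt (fun s => p a l s) (pt a l t) t)
    (hpa : ∀ a l t, HasDerivAt (fun b => p b l t) (pa a l t) a)
    (hPDE : ∀ a l t, pt a l t + pa a l t = -(β a l + μ a l + F0) * p a l t)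
    (hbc : ∀ l t, p 0 l t = Φ (fun q => p q.1 q.2 t) l)
    (hcont : ∀ t, Continuous fun q : ℝ × ℝ => p q.1 q.2 t)
    (hcont' : ∀ t, Continuous fun q : ℝ × ℝ => pt q.1 q.2 t)
    (P : ℝ → ℝ)
    (hP : ∀ t, P t = ∫ l in (0:ℝ)..l_m, ∫ a in (0:ℝ)..a_m, p a l t)
    (hP' : ∀ t, HasDerivAt P (∫ l in (0:ℝ)..l_m, ∫ a in (0:ℝ)..a_m, pt a l t) t) :
    -- L¹ bound on the boundary output of Φ
    (∀ u : ℝ × ℝ → ℝ,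
      Integrable u (volume.restrict (Ioo 0 a_m ×ˢ Ioo 0 l_m)) →
      (∀ q, 0 ≤ u q) →
      ∫ l in (0:ℝ)..l_m, |Φ u l| ≤
        ∫ q in Ioo 0 a_m ×ˢ Ioo 0 l_m,
          |u q| * (2 * β q.1 q.2 * ∫ l in (0:ℝ)..l_m, r l q.2)) ∧
    -- exponential decay of the total population
    (∀ t, 0 ≤ t →
      (∫ l in (0:ℝ)..l_m, ∫ a in (0:ℝ)..a_m, pt a l t) ≤ -κ * P t) ∧
    (∀ t, 0 ≤ t → P t ≤ Real.exp (-κ * t) * P 0) :=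
  stmt_19_general a_m l_m F0 κ ham hlm β μ r hβ hβ0 hμ hr hr0 Φ hΦ hdiss p pt pa hp0 hpa hPDE hbc
    hcont hcont' P hP hP'
end
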